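/- arXiv:1001.0236 — 6 statements merged into one kernel-verified Lean document; each statement's English description precedes it below -/
import Mathlib

section
/- Let p₀, p₁, p₂, p₃ be points in the Euclidean plane with p₁ ≠ p₀, p₁ ≠ p₂, p₂ ≠ p₃, and with p₀ and p₃ not lying on the line through p₁ and p₂. Write |a| = dist(p₀,p₁), |b| = dist(p₁,p₂), |c| = dist(p₂,p₃), ψ_ba = π − ∠p₀p₁p₂, and ψ_bc = π − ∠p₁p₂p₃. Set δ = +1 if p₀ and p₃ lie strictly on the same side of the line through p₁ and p₂, and δ = −1 if they lie strictly on opposite sides. Then dist(p₀,p₃)² = |a|² + |b|² + |c|² + 2|a||b|·cos ψ_ba + 2|b||c|·cos ψ_bc + 2|a||c|·cos(ψ_ba + δ·ψ_bc). -/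
/-!
With `u = p₀ - p₁`, `v = p₁ - p₂`, `w = p₃ - p₂` we have `p₀ - p₃ = u + v - w`, and expanding
`‖u + v - w‖²` gives the formula with `-cos ∠(u, w)` in place of the last cosine. To identify
that cosine, pass to the oriented angles `θ = ∡ p₀ p₁ p₂` and `φ = ∡ p₁ p₂ p₃`: the unoriented
angles are `|θ|` and `|φ|`, and `θ + φ = ∡(u, w) + π` modulo `2π`. Points on the same side of the
line give `θ`, `φ` the same sign, points on opposite sides opposite signs, and in either case
`(π - |θ|) + δ (π - |φ|) ≡ ±(θ + φ)`, whose cosine is `-cos ∠(u, w)`.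
-/

open Real EuclideanGeometry
open scoped RealInnerProductSpace

namespace Real.Angle

theorem coe_abs_toReal_of_sign_nonpos {θ : Angle} (h : θ.sign ≤ 0) : ↑|θ.toReal| = -θ :=
  neg_eq_iff_eq_neg.1 (neg_coe_abs_toReal_of_sign_nonpos h)

theorem cos_pi_sub_abs_toReal_add_pi_sub_abs_toReal {θ φ : Angle} (h : θ.sign = φ.sign) :
    Real.cos ((π - |θ.toReal|) + (π - |φ.toReal|)) = (θ + φ).cos := by
  rw [← cos_coe, coe_add, coe_sub, coe_sub]
  rcases le_total 0 θ.sign with hθ | hθ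
  · rw [coe_abs_toReal_of_sign_nonneg hθ, coe_abs_toReal_of_sign_nonneg (h ▸ hθ),
      show (π : Angle) - θ + (π - φ) = -(θ + φ) + (π + π) by abel, coe_pi_add_coe_pi, add_zero,
      cos_neg]
  · rw [coe_abs_toReal_of_sign_nonpos hθ, coe_abs_toReal_of_sign_nonpos (h ▸ hθ),
      show (π : Angle) - -θ + (π - -φ) = θ + φ + (π + π) by abel, coe_pi_add_coe_pi, add_zero]

theorem cos_pi_sub_abs_toReal_sub_pi_sub_abs_toReal {θ φ : Angle} (h : θ.sign = -φ.sign) :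
    Real.cos ((π - |θ.toReal|) - (π - |φ.toReal|)) = (θ + φ).cos := by
  rw [← cos_coe, coe_sub, coe_sub, coe_sub]
  rcases le_total 0 θ.sign with hθ | hθ
  · have hφ : φ.sign ≤ 0 := by rw [h] at hθ; revert hθ; cases φ.sign <;> decide
    rw [coe_abs_toReal_of_sign_nonneg hθ, coe_abs_toReal_of_sign_nonpos hφ,
      show (π : Angle) - θ - (π - -φ) = -(θ + φ) by abel, cos_neg]
  · have hφ : 0 ≤ φ.sign := by rw [h] at hθ; revert hθ; cases φ.sign <;> decide
    rw [coe_abs_toReal_of_sign_nonpos hθ, coe_abs_toReal_of_sign_nonneg hφ,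
      show (π : Angle) - -θ - (π - φ) = θ + φ by abel]

end Real.Angle

namespace EuclideanGeometry

variable {V P : Type*} [NormedAddCommGroup V] [InnerProductSpace ℝ V] [MetricSpace P]
  [NormedAddTorsor V P]

theorem dist_sq_eq_law_cos_of_three_segments (p₀ p₁ p₂ p₃ : P) :
    dist p₀ p₃ ^ 2 = dist p₀ p₁ ^ 2 + dist p₁ p₂ ^ 2 + dist p₂ p₃ ^ 2
      - 2 * dist p₀ p₁ * dist p₁ p₂ * Real.cos (∠ p₀ p₁ p₂)
      - 2 * dist p₁ p₂ * dist p₂ p₃ * Real.cos (∠ p₁ p₂ p₃)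
      - 2 * dist p₀ p₁ * dist p₂ p₃ *
          Real.cos (InnerProductGeometry.angle (p₀ -ᵥ p₁) (p₃ -ᵥ p₂)) := by
  have h_cos (x y : V) :
      2 * ‖x‖ * ‖y‖ * Real.cos (InnerProductGeometry.angle x y) = 2 * ⟪x, y⟫ := by
    rw [← InnerProductGeometry.cos_angle_mul_norm_mul_norm]; ring
  have h₀₃ : p₀ -ᵥ p₃ = (p₀ -ᵥ p₁) + (p₁ -ᵥ p₂) - (p₃ -ᵥ p₂) := by
    rw [vsub_add_vsub_cancel, vsub_sub_vsub_cancel_right]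
  rw [dist_eq_norm_vsub V p₀ p₃, dist_eq_norm_vsub V p₀ p₁, dist_eq_norm_vsub V p₁ p₂,
    dist_eq_norm_vsub' V p₂ p₃, angle, angle, ← neg_vsub_eq_vsub_rev p₁ p₂, h₀₃,
    ← norm_neg (p₁ -ᵥ p₂), h_cos, norm_neg, h_cos, h_cos, norm_sub_sq_real, norm_add_sq_real,
    inner_neg_right, inner_add_left]
  ring

variable [Module.Oriented ℝ V (Fin 2)] [Fact (Module.finrank ℝ V = 2)]

theorem oangle_add_oangle_eq_oangle_vsub_add_pi {p₀ p₁ p₂ p₃ : P} (h₁₀ : p₁ ≠ p₀)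
    (h₁₂ : p₁ ≠ p₂) (h₂₃ : p₂ ≠ p₃) :
    ∡ p₀ p₁ p₂ + ∡ p₁ p₂ p₃ = o.oangle (p₀ -ᵥ p₁) (p₃ -ᵥ p₂) + π := by
  have hv : p₂ -ᵥ p₁ ≠ 0 := vsub_ne_zero.2 h₁₂.symm
  rw [oangle, oangle, ← neg_vsub_eq_vsub_rev p₂ p₁, o.oangle_neg_left hv (vsub_ne_zero.2 h₂₃.symm),
    ← add_assoc, o.oangle_add (vsub_ne_zero.2 h₁₀.symm) hv (vsub_ne_zero.2 h₂₃.symm)]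

theorem sign_oangle_eq_of_sSameSide {p₀ p₁ p₂ p₃ : P}
    (h : line[ℝ, p₁, p₂].SSameSide p₀ p₃) : (∡ p₀ p₁ p₂).sign = (∡ p₁ p₂ p₃).sign := by
  rw [← neg_inj, oangle_swap₁₂_sign, oangle_swap₂₃_sign]
  exact (h.oangle_sign_eq (left_mem_affineSpan_pair _ _ _) (right_mem_affineSpan_pair _ _ _)).symm

theorem sign_oangle_eq_neg_of_sOppSide {p₀ p₁ p₂ p₃ : P}
    (h : line[ℝ, p₁, p₂].SOppSide p₀ p₃) : (∡ p₀ p₁ p₂).sign = -(∡ p₁ p₂ p₃).sign := by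
  rw [← neg_inj, oangle_swap₁₂_sign, oangle_swap₂₃_sign]
  exact h.symm.oangle_sign_eq_neg (left_mem_affineSpan_pair _ _ _) (right_mem_affineSpan_pair _ _ _)

theorem cos_pi_sub_angle_add_mul_pi_sub_angle {p₀ p₁ p₂ p₃ : P} {δ : ℝ} (h₁₂ : p₁ ≠ p₂)
    (hδ : (line[ℝ, p₁, p₂].SSameSide p₀ p₃ ∧ δ = 1) ∨ (line[ℝ, p₁, p₂].SOppSide p₀ p₃ ∧ δ = -1)) :
    Real.cos ((π - ∠ p₀ p₁ p₂) + δ * (π - ∠ p₁ p₂ p₃)) =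
      -Real.cos (InnerProductGeometry.angle (p₀ -ᵥ p₁) (p₃ -ᵥ p₂)) := by
  have h₁₀ : p₁ ≠ p₀ := by
    rintro rfl
    exact hδ.elim (·.1.left_notMem) (·.1.left_notMem) (left_mem_affineSpan_pair ℝ p₁ p₂)
  have h₂₃ : p₂ ≠ p₃ := by
    rintro rfl
    exact hδ.elim (·.1.right_notMem) (·.1.right_notMem) (right_mem_affineSpan_pair ℝ p₁ p₂)
  rw [angle_eq_abs_oangle_toReal h₁₀.symm h₁₂.symm, angle_eq_abs_oangle_toReal h₁₂ h₂₃.symm]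
  calc _ = (∡ p₀ p₁ p₂ + ∡ p₁ p₂ p₃).cos := by
        rcases hδ with ⟨h, rfl⟩ | ⟨h, rfl⟩
        · rw [one_mul]
          exact Real.Angle.cos_pi_sub_abs_toReal_add_pi_sub_abs_toReal
            (sign_oangle_eq_of_sSameSide h)
        · rw [neg_one_mul, ← sub_eq_add_neg]
          exact Real.Angle.cos_pi_sub_abs_toReal_sub_pi_sub_abs_toReal
            (sign_oangle_eq_neg_of_sOppSide h)
    _ = _ := by
        rw [oangle_add_oangle_eq_oangle_vsub_add_pi h₁₀ h₁₂ h₂₃, Real.Angle.cos_add_pi,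
          o.cos_oangle_eq_cos_angle (vsub_ne_zero.2 h₁₀.symm) (vsub_ne_zero.2 h₂₃.symm)]

end EuclideanGeometry

theorem three_shortcut_squared_length_general
    (p₀ p₁ p₂ p₃ : EuclideanSpace ℝ (Fin 2))
    (h₁₂ : p₁ ≠ p₂)
    (δ : ℝ)
    (hδ : ((affineSpan ℝ ({p₁, p₂} : Set (EuclideanSpace ℝ (Fin 2)))).SSameSide p₀ p₃ ∧ δ = 1) ∨
          ((affineSpan ℝ ({p₁, p₂} : Set (EuclideanSpace ℝ (Fin 2)))).SOppSide p₀ p₃ ∧ δ = -1)) :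
    dist p₀ p₃ ^ 2 =
      dist p₀ p₁ ^ 2 + dist p₁ p₂ ^ 2 + dist p₂ p₃ ^ 2
      + 2 * dist p₀ p₁ * dist p₁ p₂ * Real.cos (π - ∠ p₀ p₁ p₂)
      + 2 * dist p₁ p₂ * dist p₂ p₃ * Real.cos (π - ∠ p₁ p₂ p₃)
      + 2 * dist p₀ p₁ * dist p₂ p₃ *
          Real.cos ((π - ∠ p₀ p₁ p₂) + δ * (π - ∠ p₁ p₂ p₃)) := by
  have : Fact (Module.finrank ℝ (EuclideanSpace ℝ (Fin 2)) = 2) := ⟨finrank_euclideanSpace_fin⟩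
  -- Any orientation will do: oriented angles only enter the proof, not the statement.
  have : Module.Oriented ℝ (EuclideanSpace ℝ (Fin 2)) (Fin 2) :=
    ⟨(EuclideanSpace.basisFun (Fin 2) ℝ).toBasis.orientation⟩
  rw [dist_sq_eq_law_cos_of_three_segments p₀ p₁ p₂ p₃,
    cos_pi_sub_angle_add_mul_pi_sub_angle h₁₂ hδ, Real.cos_pi_sub, Real.cos_pi_sub]
  ring

/-- exact squared length of a 3-shortcut in the plane. -/
theorem three_shortcut_squared_length
    (p₀ p₁ p₂ p₃ : EuclideanSpace ℝ (Fin 2))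
    (h₁₀ : p₁ ≠ p₀) (h₁₂ : p₁ ≠ p₂) (h₂₃ : p₂ ≠ p₃)
    (h₀ : p₀ ∉ affineSpan ℝ ({p₁, p₂} : Set (EuclideanSpace ℝ (Fin 2))))
    (h₃ : p₃ ∉ affineSpan ℝ ({p₁, p₂} : Set (EuclideanSpace ℝ (Fin 2))))
    (δ : ℝ)
    (hδ : ((affineSpan ℝ ({p₁, p₂} : Set (EuclideanSpace ℝ (Fin 2)))).SSameSide p₀ p₃ ∧ δ = 1) ∨
          ((affineSpan ℝ ({p₁, p₂} : Set (EuclideanSpace ℝ (Fin 2)))).SOppSide p₀ p₃ ∧ δ = -1)) :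
    dist p₀ p₃ ^ 2 =
      dist p₀ p₁ ^ 2 + dist p₁ p₂ ^ 2 + dist p₂ p₃ ^ 2
      + 2 * dist p₀ p₁ * dist p₁ p₂ * Real.cos (π - ∠ p₀ p₁ p₂)
      + 2 * dist p₁ p₂ * dist p₂ p₃ * Real.cos (π - ∠ p₁ p₂ p₃)
      + 2 * dist p₀ p₁ * dist p₂ p₃ *
          Real.cos ((π - ∠ p₀ p₁ p₂) + δ * (π - ∠ p₁ p₂ p₃)) :=
  three_shortcut_squared_length_general p₀ p₁ p₂ p₃ h₁₂ δ hδ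
end

section
/- Let p₀, p₁, p₂, p₃ be points in the Euclidean plane with p₁ ≠ p₀, p₁ ≠ p₂, p₂ ≠ p₃. Write |a| = dist(p₀,p₁), |b| = dist(p₁,p₂), |c| = dist(p₂,p₃), ψ_ba = π − ∠p₀p₁p₂, and ψ_bc = π − ∠p₁p₂p₃. Then dist(p₀,p₃)² ≤ 2|a|² + |b|² + 2|c|² + 2|a||b|·cos ψ_ba + 2|b||c|·cos ψ_bc. -/
/-!
With `a = p₁ - p₀`, `b = p₂ - p₁`, `c = p₃ - p₂` we have `p₃ - p₀ = a + b + c`, and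
`|a| |b| cos (π - ∠ p₀ p₁ p₂) = ⟪a, b⟫`, `|b| |c| cos (π - ∠ p₁ p₂ p₃) = ⟪b, c⟫`. Expanding
`‖a + b + c‖²`, the only term not accounted for by the right-hand side is `2 ⟪a, c⟫`,
which is at most `‖a‖² + ‖c‖²`.
-/

open Real EuclideanGeometry

open scoped RealInnerProductSpace

theorem norm_add_add_sq_le {V : Type*} [NormedAddCommGroup V] [InnerProductSpace ℝ V]
    (a b c : V) :
    ‖a + b + c‖ ^ 2 ≤ 2 * ‖a‖ ^ 2 + ‖b‖ ^ 2 + 2 * ‖c‖ ^ 2 + 2 * ⟪a, b⟫ + 2 * ⟪b, c⟫ := by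
  have hac : 2 * ⟪a, c⟫ ≤ ‖a‖ ^ 2 + ‖c‖ ^ 2 := by
    linarith [norm_sub_sq_real a c, sq_nonneg ‖a - c‖]
  rw [norm_add_sq_real, norm_add_sq_real, inner_add_left]
  linarith

section EuclideanAffine

variable {V P : Type*} [NormedAddCommGroup V] [InnerProductSpace ℝ V] [MetricSpace P]
  [NormedAddTorsor V P]

theorem EuclideanGeometry.dist_mul_dist_mul_cos_pi_sub_angle (p₀ p₁ p₂ : P) :
    dist p₀ p₁ * dist p₁ p₂ * cos (π - ∠ p₀ p₁ p₂) = ⟪p₁ -ᵥ p₀, p₂ -ᵥ p₁⟫ := by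
  rw [cos_pi_sub, EuclideanGeometry.angle, dist_eq_norm_vsub V, dist_eq_norm_vsub' V,
    ← neg_vsub_eq_vsub_rev p₀ p₁, inner_neg_left,
    ← InnerProductGeometry.cos_angle_mul_norm_mul_norm]
  ring

theorem EuclideanGeometry.dist_sq_le_of_three_steps (p₀ p₁ p₂ p₃ : P) :
    dist p₀ p₃ ^ 2 ≤
      2 * dist p₀ p₁ ^ 2 + dist p₁ p₂ ^ 2 + 2 * dist p₂ p₃ ^ 2
      + 2 * dist p₀ p₁ * dist p₁ p₂ * cos (π - ∠ p₀ p₁ p₂)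
      + 2 * dist p₁ p₂ * dist p₂ p₃ * cos (π - ∠ p₁ p₂ p₃) := by
  have hsum : p₃ -ᵥ p₀ = (p₁ -ᵥ p₀) + (p₂ -ᵥ p₁) + (p₃ -ᵥ p₂) := by
    rw [add_comm (p₁ -ᵥ p₀), vsub_add_vsub_cancel, add_comm, vsub_add_vsub_cancel]
  have h := norm_add_add_sq_le (p₁ -ᵥ p₀) (p₂ -ᵥ p₁) (p₃ -ᵥ p₂)
  rw [← hsum, ← dist_mul_dist_mul_cos_pi_sub_angle, ← dist_mul_dist_mul_cos_pi_sub_angle,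
    ← dist_eq_norm_vsub' V, ← dist_eq_norm_vsub' V, ← dist_eq_norm_vsub' V,
    ← dist_eq_norm_vsub' V] at h
  linarith

end EuclideanAffine

theorem three_shortcut_squared_length_bound_general
    (p₀ p₁ p₂ p₃ : EuclideanSpace ℝ (Fin 2)) :
    dist p₀ p₃ ^ 2 ≤
      2 * dist p₀ p₁ ^ 2 + dist p₁ p₂ ^ 2 + 2 * dist p₂ p₃ ^ 2
      + 2 * dist p₀ p₁ * dist p₁ p₂ * Real.cos (π - ∠ p₀ p₁ p₂)
      + 2 * dist p₁ p₂ * dist p₂ p₃ * Real.cos (π - ∠ p₁ p₂ p₃) :=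
  dist_sq_le_of_three_steps p₀ p₁ p₂ p₃

/-- upper bound on the squared length of a 3-shortcut in the plane. -/
theorem three_shortcut_squared_length_bound
    (p₀ p₁ p₂ p₃ : EuclideanSpace ℝ (Fin 2))
    (h₁₀ : p₁ ≠ p₀) (h₁₂ : p₁ ≠ p₂) (h₂₃ : p₂ ≠ p₃) :
    dist p₀ p₃ ^ 2 ≤
      2 * dist p₀ p₁ ^ 2 + dist p₁ p₂ ^ 2 + 2 * dist p₂ p₃ ^ 2
      + 2 * dist p₀ p₁ * dist p₁ p₂ * Real.cos (π - ∠ p₀ p₁ p₂)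
      + 2 * dist p₁ p₂ * dist p₂ p₃ * Real.cos (π - ∠ p₁ p₂ p₃) :=
  three_shortcut_squared_length_bound_general p₀ p₁ p₂ p₃
end

section
/- Let α ≥ 1 be a real number, let P be a finite set of at least 3 points in d-dimensional Euclidean space, and let T be any tree on vertex set P (a connected acyclic graph whose vertices are the points of P), with weight w(T) = Σ_{pq edge of T} dist(p,q)^α. Then there exists a tour on P whose α-weight is at most 2·3^(α−1)·w(T). -/
/-- The α-weight of a tour given as a list: the sum of `dist p q ^ α` over all
consecutive pairs of the list, cyclically. -/
noncomputable def tourWeight {d : ℕ} (α : ℝ) (L : List (EuclideanSpace ℝ (Fin d))) : ℝ :=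
  ∑ i ∈ Finset.range L.length, dist (L.getD i 0) (L.getD ((i + 1) % L.length) 0) ^ α

/-- A tour on a finite point set `P`: a cyclic ordering of `P`, represented as a list
without repetitions whose entries are exactly the points of `P`. -/
def IsTour {d : ℕ} (L : List (EuclideanSpace ℝ (Fin d))) (P : Finset (EuclideanSpace ℝ (Fin d))) :
    Prop :=
  L.Nodup ∧ ∀ x, x ∈ L ↔ x ∈ P

/-- The α-weight of a graph on a point set: the sum of `dist p q ^ α` over its edges. -/
noncomputable def graphWeight {d : ℕ} (α : ℝ) {P : Finset (EuclideanSpace ℝ (Fin d))}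
    (T : SimpleGraph {x : EuclideanSpace ℝ (Fin d) // x ∈ P}) [Fintype T.edgeSet] : ℝ :=
  ∑ e ∈ T.edgeFinset,
    Sym2.lift ⟨fun u v => dist u.1 v.1 ^ α, fun u v => by simp [dist_comm]⟩ e

/-!
Sekanina's construction: the cube of a tree has a Hamiltonian cycle. Rooting the tree and taking
parents along shortest paths, it is grown from single vertices by grafting, `graft t c` joining
the root of `c` to the root of `t`. By induction on grafts there is a Hamiltonian path from the
root to a tree-neighbour of the root (or to the root itself): run the path of `t`, jump to the
end of the path of `c`, and run that path backwards. The jump spans at most three tree edges, so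
by the power mean inequality it costs at most `3^(α-1)` times their α-weights. Hence the
invariant `pathWeight + 3^(α-1) * dist(root, end)^α ≤ 2 * 3^(α-1) * weight` survives a graft, and
since `3^(α-1) ≥ 1` its second term pays for the edge closing the path into a tour.
-/

lemma rpow_dist_le_three_hops {Y : Type*} [PseudoMetricSpace Y] {α : ℝ} (hα : 1 ≤ α)
    (a b c d : Y) :
    dist a d ^ α ≤ 3 ^ (α - 1) * (dist a b ^ α + dist b c ^ α + dist c d ^ α) := by
  have hmean := Real.rpow_sum_le_const_mul_sum_rpow_of_nonneg Finset.univ hα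
    (f := ![dist a b, dist b c, dist c d]) (by simp [Fin.forall_fin_succ, dist_nonneg])
  simp only [Fin.sum_univ_three, Finset.card_univ, Fintype.card_fin] at hmean
  calc dist a d ^ α ≤ (dist a b + dist b c + dist c d) ^ α :=
        Real.rpow_le_rpow dist_nonneg (dist_triangle4 a b c d) (by linarith)
    _ ≤ _ := by simpa using hmean

section PathWeight

variable {Y : Type*} [PseudoMetricSpace Y]

noncomputable def pathWeight (α : ℝ) : List Y → ℝ
  | [] => 0
  | [_] => 0
  | x :: y :: l => dist x y ^ α + pathWeight α (y :: l)

lemma pathWeight_append (α : ℝ) {A B : List Y} {a b : Y} (ha : A.getLast? = some a)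
    (hb : B.head? = some b) :
    pathWeight α (A ++ B) = pathWeight α A + dist a b ^ α + pathWeight α B := by
  induction A with
  | nil => simp at ha
  | cons x A ih =>
    cases A with
    | nil =>
      cases B with
      | nil => simp at hb
      | cons b' B =>
        obtain rfl : x = a := by simpa using ha
        obtain rfl : b' = b := by simpa using hb
        simp [pathWeight]
    | cons y A =>
      rw [List.cons_append, List.cons_append, pathWeight, ← List.cons_append,
        ih (by simpa using ha), pathWeight]
      ring

lemma pathWeight_reverse (α : ℝ) (L : List Y) : pathWeight α L.reverse = pathWeight α L := by
  induction L with
  | nil => rfl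
  | cons x l ih =>
    cases l with
    | nil => rfl
    | cons y m =>
      rw [List.reverse_cons, pathWeight_append α (a := y) (b := x) (by simp) rfl, ih,
        pathWeight, pathWeight, dist_comm]
      ring

lemma pathWeight_map {Z : Type*} [PseudoMetricSpace Z] (α : ℝ) {f : Y → Z} (hf : Isometry f)
    (L : List Y) : pathWeight α (L.map f) = pathWeight α L := by
  induction L with
  | nil => rfl
  | cons x l ih =>
    cases l with
    | nil => rfl
    | cons y m =>
      simp only [List.map_cons, pathWeight] at ih ⊢
      rw [ih, hf.dist_eq]

lemma sum_range_dist_getD_rpow (α : ℝ) (z : Y) (L : List Y) :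
    ∑ i ∈ Finset.range (L.length - 1), dist (L.getD i z) (L.getD (i + 1) z) ^ α =
      pathWeight α L := by
  induction L with
  | nil => simp [pathWeight]
  | cons x l ih =>
    cases l with
    | nil => simp [pathWeight]
    | cons y m =>
      rw [List.length_cons, Nat.add_sub_cancel, List.length_cons, Finset.sum_range_succ',
        pathWeight, ← ih, add_comm]
      simp only [List.getD_cons_succ, List.getD_cons_zero, List.length_cons, Nat.add_sub_cancel]

end PathWeight

lemma tourWeight_eq_pathWeight_add {d : ℕ} (α : ℝ) {L : List (EuclideanSpace ℝ (Fin d))}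
    {a b : EuclideanSpace ℝ (Fin d)} (ha : L.head? = some a) (hb : L.getLast? = some b) :
    tourWeight α L = pathWeight α L + dist b a ^ α := by
  obtain ⟨m, hm⟩ : ∃ m, L.length = m + 1 :=
    Nat.exists_eq_add_one.2 (List.length_pos_iff.2 (by rintro rfl; simp at ha))
  rw [tourWeight, hm, Finset.sum_range_succ, Nat.mod_self, ← sum_range_dist_getD_rpow α 0 L, hm,
    Nat.add_sub_cancel]
  congr 1
  · refine Finset.sum_congr rfl fun i hi => ?_
    rw [Nat.mod_eq_of_lt (by simpa using hi)]
  · rw [List.getLast?_eq_getElem?, hm, Nat.add_sub_cancel] at hb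
    rw [List.head?_eq_getElem?] at ha
    simp [List.getD_eq_getElem?_getD, ha, hb]

inductive GraftTree (Y : Type*) where
  | leaf : Y → GraftTree Y
  | graft : GraftTree Y → GraftTree Y → GraftTree Y

namespace GraftTree

variable {Y : Type*}

def root : GraftTree Y → Y
  | leaf x => x
  | graft t _ => t.root

def verts : GraftTree Y → List Y
  | leaf x => [x]
  | graft t c => t.verts ++ c.verts

noncomputable def wt [PseudoMetricSpace Y] (α : ℝ) : GraftTree Y → ℝ
  | leaf _ => 0
  | graft t c => t.wt α + c.wt α + dist t.root c.root ^ α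

lemma root_foldl_graft (t : GraftTree Y) (cs : List (GraftTree Y)) :
    (cs.foldl graft t).root = t.root := by
  induction cs generalizing t with
  | nil => rfl
  | cons c cs ih => rw [List.foldl_cons, ih, root]

lemma verts_foldl_graft (t : GraftTree Y) (cs : List (GraftTree Y)) :
    (cs.foldl graft t).verts = t.verts ++ cs.flatMap verts := by
  induction cs generalizing t with
  | nil => simp
  | cons c cs ih => simp [ih, verts]

lemma wt_foldl_graft [PseudoMetricSpace Y] (α : ℝ) (t : GraftTree Y) (cs : List (GraftTree Y)) :
    (cs.foldl graft t).wt α =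
      t.wt α + (cs.map fun c => c.wt α + dist t.root c.root ^ α).sum := by
  induction cs generalizing t with
  | nil => simp
  | cons c cs ih => rw [List.foldl_cons, ih, wt, root, List.map_cons, List.sum_cons]; ring

def last : GraftTree Y → Y
  | leaf x => x
  | graft _ c => c.root

def cubePath : GraftTree Y → List Y
  | leaf x => [x]
  | graft t c => t.cubePath ++ c.cubePath.reverse

lemma cubePath_perm_verts (s : GraftTree Y) : s.cubePath.Perm s.verts := by
  induction s with
  | leaf x => rfl
  | graft t c iht ihc => exact iht.append ((List.reverse_perm _).trans ihc)

lemma head?_cubePath (s : GraftTree Y) : s.cubePath.head? = some s.root := by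
  induction s with
  | leaf x => rfl
  | graft t c iht _ => simp [cubePath, root, List.head?_append, iht]

lemma getLast?_cubePath (s : GraftTree Y) : s.cubePath.getLast? = some s.last := by
  cases s with
  | leaf x => rfl
  | graft t c => simp [cubePath, last, List.getLast?_append, head?_cubePath]

lemma pathWeight_cubePath_add_mul_rpow_dist_le [PseudoMetricSpace Y] {α : ℝ} (hα : 1 ≤ α)
    (s : GraftTree Y) :
    pathWeight α s.cubePath + 3 ^ (α - 1) * dist s.root s.last ^ α ≤
      2 * 3 ^ (α - 1) * s.wt α := by
  induction s with
  | leaf x => simp [cubePath, pathWeight, wt, root, last, Real.zero_rpow (by linarith : α ≠ 0)]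
  | graft t c iht ihc =>
    have hsplit : pathWeight α (t.graft c).cubePath =
        pathWeight α t.cubePath + dist t.last c.last ^ α + pathWeight α c.cubePath := by
      rw [cubePath, pathWeight_append α t.getLast?_cubePath
        (by rw [List.head?_reverse, getLast?_cubePath]), pathWeight_reverse]
    have hhop := rpow_dist_le_three_hops hα t.last t.root c.root c.last
    rw [dist_comm t.last t.root] at hhop
    rw [hsplit, root, last, wt]
    linarith

lemma pathWeight_cubePath_add_rpow_dist_le [PseudoMetricSpace Y] {α : ℝ} (hα : 1 ≤ α)
    (s : GraftTree Y) :
    pathWeight α s.cubePath + dist s.last s.root ^ α ≤ 2 * 3 ^ (α - 1) * s.wt α := by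
  have hK : (1 : ℝ) ≤ 3 ^ (α - 1) := Real.one_le_rpow (by norm_num) (by linarith)
  have hd : 0 ≤ dist s.root s.last ^ α := Real.rpow_nonneg dist_nonneg _
  rw [dist_comm]
  nlinarith [s.pathWeight_cubePath_add_mul_rpow_dist_le hα]

end GraftTree

/-- A rooted tree given by parent pointers; `depth` certifies that iterating `parent` reaches
`root`. -/
structure ParentMap (V : Type*) where
  root : V
  parent : V → V
  depth : V → ℕ
  depth_root : depth root = 0
  depth_parent : ∀ v ≠ root, depth (parent v) + 1 = depth v

namespace ParentMap

variable {V : Type*} (F : ParentMap V)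

lemma eq_root_of_depth_eq_zero {v : V} (h : F.depth v = 0) : v = F.root := by
  by_contra hv
  have := F.depth_parent v hv
  omega

lemma depth_iterate_parent {j : ℕ} {v : V} (h : j ≤ F.depth v) :
    F.depth (F.parent^[j] v) = F.depth v - j := by
  induction j with
  | zero => rfl
  | succ j ih =>
    have hj := ih (by omega)
    have hne : F.parent^[j] v ≠ F.root := fun hr => by
      rw [hr, F.depth_root] at hj; omega
    rw [Function.iterate_succ_apply']
    have := F.depth_parent _ hne
    omega

lemma iterate_parent_ne_root {j : ℕ} {v : V} (h : j < F.depth v) :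
    F.parent^[j] v ≠ F.root := fun hr => by
  have := F.depth_iterate_parent h.le
  rw [hr, F.depth_root] at this
  omega

lemma iterate_parent_depth (v : V) : F.parent^[F.depth v] v = F.root :=
  F.eq_root_of_depth_eq_zero (by rw [F.depth_iterate_parent le_rfl, Nat.sub_self])

lemma injOn_edge : Set.InjOn (fun v => s(v, F.parent v)) {v | v ≠ F.root} := by
  intro a ha b hb hab
  rcases Sym2.eq_iff.1 hab with ⟨h, _⟩ | ⟨hab, hba⟩
  · exact h
  · have ha' := F.depth_parent a ha
    have hb' := F.depth_parent b hb
    rw [hba] at ha'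
    rw [← hab] at hb'
    omega

variable [Fintype V] [DecidableEq V]

def children (u : V) : Finset V := Finset.univ.filter fun c => c ≠ F.root ∧ F.parent c = u

lemma mem_children {u c : V} : c ∈ F.children u ↔ c ≠ F.root ∧ F.parent c = u := by
  simp [children]

lemma depth_of_mem_children {u c : V} (hc : c ∈ F.children u) : F.depth c = F.depth u + 1 := by
  obtain ⟨hr, rfl⟩ := F.mem_children.1 hc
  exact (F.depth_parent c hr).symm

/-- The subtree below `u`, truncated at height `n`. -/
noncomputable def subtree : ℕ → V → GraftTree V
  | 0, u => .leaf u
  | n + 1, u => ((F.children u).toList.map (subtree n)).foldl .graft (.leaf u)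

lemma root_subtree (n : ℕ) (u : V) : (F.subtree n u).root = u := by
  cases n with
  | zero => rfl
  | succ n => rw [subtree, GraftTree.root_foldl_graft, GraftTree.root]

lemma verts_subtree_succ (n : ℕ) (u : V) :
    (F.subtree (n + 1) u).verts = u :: (F.children u).toList.flatMap (F.subtree n · |>.verts) := by
  simp [subtree, GraftTree.verts_foldl_graft, GraftTree.verts, List.flatMap_map]

lemma mem_subtree_succ {n : ℕ} {u x : V} :
    x ∈ (F.subtree (n + 1) u).verts ↔
      x = u ∨ ∃ c ∈ F.children u, x ∈ (F.subtree n c).verts := by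
  simp [verts_subtree_succ]

lemma depth_le_and_iterate_of_mem_subtree {n : ℕ} {u x : V} (hx : x ∈ (F.subtree n u).verts) :
    F.depth u ≤ F.depth x ∧ F.parent^[F.depth x - F.depth u] x = u := by
  induction n generalizing u with
  | zero =>
    obtain rfl : x = u := by simpa [subtree, GraftTree.verts] using hx
    simp
  | succ n ih =>
    rcases F.mem_subtree_succ.1 hx with rfl | ⟨c, hc, hxc⟩
    · simp
    · obtain ⟨hle, hiter⟩ := ih hxc
      have hdc := F.depth_of_mem_children hc
      refine ⟨by omega, ?_⟩
      rw [show F.depth x - F.depth u = F.depth x - F.depth c + 1 by omega,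
        Function.iterate_succ_apply', hiter, (F.mem_children.1 hc).2]

lemma mem_subtree_iterate_parent {k n : ℕ} {v : V} (hkv : k ≤ F.depth v) (hkn : k ≤ n) :
    v ∈ (F.subtree n (F.parent^[k] v)).verts := by
  induction k generalizing n with
  | zero =>
    cases n with
    | zero => simp [subtree, GraftTree.verts]
    | succ n => exact F.mem_subtree_succ.2 (Or.inl rfl)
  | succ k ih =>
    obtain ⟨n, rfl⟩ : ∃ m, n = m + 1 := ⟨n - 1, by omega⟩
    rw [Function.iterate_succ_apply']
    have hchild := F.mem_children.2 ⟨F.iterate_parent_ne_root hkv, rfl⟩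
    exact F.mem_subtree_succ.2 (Or.inr ⟨_, hchild, ih (by omega) (by omega)⟩)

lemma nodup_verts_subtree (n : ℕ) (u : V) : (F.subtree n u).verts.Nodup := by
  induction n generalizing u with
  | zero => simp [subtree, GraftTree.verts]
  | succ n ih =>
    rw [verts_subtree_succ, List.nodup_cons, List.nodup_flatMap]
    refine ⟨fun hu => ?_, fun c _ => ih c, (Finset.nodup_toList _).pairwise_of_forall_ne ?_⟩
    · obtain ⟨c, hc, huc⟩ := List.mem_flatMap.1 hu
      have := (F.depth_le_and_iterate_of_mem_subtree huc).1
      have := F.depth_of_mem_children (Finset.mem_toList.1 hc)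
      omega
    · intro c hc c' hc' hne x hx hx'
      obtain ⟨hle, hiter⟩ := F.depth_le_and_iterate_of_mem_subtree hx
      obtain ⟨hle', hiter'⟩ := F.depth_le_and_iterate_of_mem_subtree hx'
      have := F.depth_of_mem_children (Finset.mem_toList.1 hc)
      have := F.depth_of_mem_children (Finset.mem_toList.1 hc')
      exact hne (by rw [← hiter, ← hiter']; congr 1; omega)

lemma wt_subtree_add [PseudoMetricSpace V] (α : ℝ) (n : ℕ) (u : V) :
    (F.subtree n u).wt α + dist u (F.parent u) ^ α =
      ((F.subtree n u).verts.map fun v => dist v (F.parent v) ^ α).sum := by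
  induction n generalizing u with
  | zero => simp [subtree, GraftTree.wt, GraftTree.verts]
  | succ n ih =>
    have hchild : ∀ c ∈ (F.children u).toList,
        (F.subtree n c).wt α + dist u (F.subtree n c).root ^ α =
          ((F.subtree n c).verts.map fun v => dist v (F.parent v) ^ α).sum := by
      intro c hc
      rw [← ih, root_subtree, ← (F.mem_children.1 (Finset.mem_toList.1 hc)).2, dist_comm]
    rw [verts_subtree_succ, subtree, GraftTree.wt_foldl_graft, GraftTree.wt, GraftTree.root,
      List.map_map, Function.comp_def, List.map_cons, List.sum_cons, List.map_congr_left hchild]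
    simp only [List.flatMap, List.map_flatten, List.sum_flatten, List.map_map, zero_add]
    exact add_comm _ _

noncomputable def toGraftTree : GraftTree V := F.subtree (Finset.univ.sup F.depth) F.root

lemma mem_verts_toGraftTree (v : V) : v ∈ F.toGraftTree.verts := by
  simpa [toGraftTree, F.iterate_parent_depth] using
    F.mem_subtree_iterate_parent le_rfl (Finset.le_sup (Finset.mem_univ v))

lemma nodup_verts_toGraftTree : F.toGraftTree.verts.Nodup := F.nodup_verts_subtree _ _

lemma wt_toGraftTree [PseudoMetricSpace V] (α : ℝ) :
    F.toGraftTree.wt α = ∑ v ∈ Finset.univ.erase F.root, dist v (F.parent v) ^ α := by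
  have hsum : F.toGraftTree.wt α + dist F.root (F.parent F.root) ^ α =
      (F.toGraftTree.verts.map fun v => dist v (F.parent v) ^ α).sum :=
    F.wt_subtree_add α _ _
  rw [← List.sum_toFinset _ F.nodup_verts_toGraftTree,
    Finset.eq_univ_of_forall fun v => List.mem_toFinset.2 (F.mem_verts_toGraftTree v),
    ← Finset.add_sum_erase _ _ (Finset.mem_univ F.root)] at hsum
  linarith

end ParentMap

namespace SimpleGraph

variable {V : Type*} {G : SimpleGraph V}

lemma Connected.exists_adj_dist_add_one (hG : G.Connected) {v r : V} (hv : v ≠ r) :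
    ∃ w, G.Adj v w ∧ G.dist w r + 1 = G.dist v r := by
  obtain ⟨p, -, hp⟩ := hG.exists_path_of_dist v r
  cases p with
  | nil => exact absurd rfl hv
  | cons h q =>
    obtain ⟨q', -, hq'⟩ := hG.exists_path_of_dist _ r
    have hle : G.dist v r ≤ (Walk.cons h q').length := G.dist_le _
    have hge : G.dist _ r ≤ q.length := G.dist_le q
    rw [Walk.length_cons] at hle hp
    exact ⟨_, h, by omega⟩

open Classical in
noncomputable def Connected.parentMap (hG : G.Connected) (r : V) : ParentMap V where
  root := r
  parent v := if hv : v = r then r else (hG.exists_adj_dist_add_one hv).choose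
  depth v := G.dist v r
  depth_root := G.dist_self
  depth_parent v hv := by
    simpa [hv] using (hG.exists_adj_dist_add_one hv).choose_spec.2

lemma Connected.adj_parent_parentMap (hG : G.Connected) {r v : V} (hv : v ≠ r) :
    G.Adj v ((hG.parentMap r).parent v) := by
  simpa [parentMap, hv] using (hG.exists_adj_dist_add_one hv).choose_spec.1

lemma IsTree.edgeFinset_eq_image_parent [Fintype V] [DecidableEq V] [Fintype G.edgeSet]
    (hG : G.IsTree) (r : V) :
    G.edgeFinset =
      (Finset.univ.erase r).image fun v => s(v, (hG.connected.parentMap r).parent v) := by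
  have hinj : Set.InjOn (fun v => s(v, (hG.connected.parentMap r).parent v))
      ↑(Finset.univ.erase r) :=
    (hG.connected.parentMap r).injOn_edge.mono fun v hv => (Finset.mem_erase.1 hv).1
  symm
  refine Finset.eq_of_subset_of_card_le (fun e he => ?_) ?_
  · obtain ⟨v, hv, rfl⟩ := Finset.mem_image.1 he
    exact mem_edgeFinset.2 (hG.connected.adj_parent_parentMap (Finset.mem_erase.1 hv).1)
  · have := hG.card_edgeFinset
    rw [Finset.card_image_of_injOn hinj, Finset.card_erase_of_mem (Finset.mem_univ r),
      Finset.card_univ]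
    omega

end SimpleGraph

theorem GraftTree.exists_of_isTree {V : Type*} {G : SimpleGraph V}
    [Fintype V] [PseudoMetricSpace V] [Fintype G.edgeSet] (hG : G.IsTree) (α : ℝ) :
    ∃ s : GraftTree V, s.verts.Nodup ∧ (∀ v, v ∈ s.verts) ∧
      s.wt α = ∑ e ∈ G.edgeFinset,
        Sym2.lift ⟨fun u v => dist u v ^ α, fun u v => by simp [dist_comm]⟩ e := by
  classical
  obtain ⟨r⟩ := hG.connected.nonempty
  set F := hG.connected.parentMap r
  have hinj : Set.InjOn (fun v => s(v, F.parent v)) ↑(Finset.univ.erase r) :=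
    F.injOn_edge.mono fun v hv => (Finset.mem_erase.1 hv).1
  refine ⟨F.toGraftTree, F.nodup_verts_toGraftTree, F.mem_verts_toGraftTree, ?_⟩
  rw [F.wt_toGraftTree, hG.edgeFinset_eq_image_parent r, Finset.sum_image hinj]
  rfl

theorem tour_from_tree_general
    (α : ℝ) (hα : 1 ≤ α) (d : ℕ)
    (P : Finset (EuclideanSpace ℝ (Fin d)))
    (T : SimpleGraph {x : EuclideanSpace ℝ (Fin d) // x ∈ P}) [Fintype T.edgeSet]
    (hT : T.IsTree) :
    ∃ L, IsTour L P ∧ tourWeight α L ≤ 2 * 3 ^ (α - 1) * graphWeight α T := by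
  obtain ⟨s, hnodup, hmem, hwt⟩ := GraftTree.exists_of_isTree hT α
  have hperm := s.cubePath_perm_verts
  refine ⟨s.cubePath.map Subtype.val, ⟨(hperm.nodup_iff.2 hnodup).map Subtype.val_injective,
    fun x => ⟨fun hx => ?_, fun hx => ?_⟩⟩, ?_⟩
  · obtain ⟨y, -, rfl⟩ := List.mem_map.1 hx
    exact y.2
  · exact List.mem_map.2 ⟨⟨x, hx⟩, hperm.mem_iff.2 (hmem _), rfl⟩
  · rw [tourWeight_eq_pathWeight_add α (a := s.root.1) (b := s.last.1)
      (by rw [List.head?_map, s.head?_cubePath]; rfl)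
      (by rw [List.getLast?_map, s.getLast?_cubePath]; rfl),
      pathWeight_map α isometry_subtype_coe]
    refine (s.pathWeight_cubePath_add_rpow_dist_le hα).trans_eq ?_
    rw [hwt]
    rfl

/-- for α ≥ 1, any finite set `P` of at least 3 points in ℝ^d and any tree `T`
on vertex set `P`, there is a tour on `P` whose α-weight is at most 2·3^(α−1) times the
α-weight of `T`. -/
theorem tour_from_tree
    (α : ℝ) (hα : 1 ≤ α) (d : ℕ)
    (P : Finset (EuclideanSpace ℝ (Fin d))) (hP : 3 ≤ P.card)
    (T : SimpleGraph {x : EuclideanSpace ℝ (Fin d) // x ∈ P}) [Fintype T.edgeSet]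
    (hT : T.IsTree) :
    ∃ L, IsTour L P ∧ tourWeight α L ≤ 2 * 3 ^ (α - 1) * graphWeight α T :=
  tour_from_tree_general α hα d P T hT
end

section
/- Let T be a tree (a connected acyclic simple graph) on a finite vertex set V with at least 3 vertices, and let u₁u₂ be an edge of T. Then the cube T³ of T — the simple graph on V in which two distinct vertices are adjacent whenever their distance in T is at most 3 — contains a Hamiltonian cycle that uses the edge u₁u₂. -/
/-!
We prove by induction on the number of vertices that for every edge `uv` of a finite tree `T`,
the cube `T³` has a Hamiltonian path from `u` to `v`. Deleting `uv` splits `T` into subtrees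
`T_u ∋ u` and `T_v ∋ v`. By induction `T_u³` has a Hamiltonian path from `u` to a vertex `z_u`
with `d(u, z_u) ≤ 1` (`z_u = u` if `T_u` is a single vertex, a neighbour of `u` otherwise), and
likewise for `v`. Since `d(z_u, z_v) ≤ 3`, the path `u … z_u z_v … v` is Hamiltonian in `T³`;
with at least three vertices it does not already use `uv`, so closing it with `vu` gives the
cycle.
-/

/-- The cube of a graph: two distinct vertices are adjacent whenever their graph
distance is at most 3. -/
def SimpleGraph.cube {V : Type*} (T : SimpleGraph V) : SimpleGraph V where
  Adj x y := x ≠ y ∧ T.dist x y ≤ 3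
  symm := by
    constructor
    intro x y h
    exact ⟨h.1.symm, by rw [SimpleGraph.dist_comm]; exact h.2⟩
  loopless := by
    constructor
    intro x h
    exact h.1 rfl

namespace SimpleGraph

open Walk

variable {V W : Type*} {G : SimpleGraph V} {H : SimpleGraph W} {u v : V}

lemma Adj.cube (h : G.Adj u v) : G.cube.Adj u v :=
  ⟨h.ne, by rw [dist_eq_one_iff_adj.2 h]; omega⟩

lemma Hom.dist_le (f : G →g H) (h : G.Reachable u v) : H.dist (f u) (f v) ≤ G.dist u v := by
  obtain ⟨p, hp⟩ := h.exists_walk_length_eq_dist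
  exact hp ▸ (p.length_map f) ▸ H.dist_le (p.map f)

/-- The source must be connected: `dist` is `0` between mutually unreachable vertices. -/
def Hom.cube (f : G →g H) (hf : Function.Injective f) (hG : G.Preconnected) :
    G.cube →g H.cube where
  toFun := f
  map_rel' h := ⟨hf.ne h.1, (f.dist_le (hG _ _)).trans h.2⟩

lemma reachable_deleteEdges_or_of_reachable {w : V} (h : G.Reachable w u) :
    (G.deleteEdges {s(u, v)}).Reachable w u ∨ (G.deleteEdges {s(u, v)}).Reachable w v := by
  obtain ⟨p⟩ := h
  induction p with
  | nil => exact .inl .rfl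
  | @cons a b t hab _ ih =>
    by_cases he : s(a, b) = s(t, v)
    · rcases Sym2.eq_iff.1 he with ⟨rfl, -⟩ | ⟨rfl, -⟩
      · exact .inl .rfl
      · exact .inr .rfl
    · have hab' : (G.deleteEdges {s(t, v)}).Adj a b := (deleteEdges_adj ..).2 ⟨hab, he⟩
      exact ih.imp hab'.reachable.trans hab'.reachable.trans

namespace Walk

variable [DecidableEq V]

lemma isHamiltonian_append_cons {a b c d : V} {p : G.Walk a b} {q : G.Walk c d}
    (h : G.Adj b c) (hp : p.support.Nodup) (hq : q.support.Nodup)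
    (hpq : p.support.Disjoint q.support) (hcover : ∀ x, x ∈ p.support ∨ x ∈ q.support) :
    (p.append (cons h q)).IsHamiltonian := by
  have hsupp : (p.append (cons h q)).support = p.support ++ q.support := by
    rw [support_append, support_cons, List.tail_cons]
  intro x
  rw [hsupp]
  refine List.count_eq_one_of_mem (hp.append hq hpq) ?_
  exact List.mem_append.2 (hcover x)

lemma IsHamiltonian.isHamiltonianCycle_cons [Fintype V] {a b : V} {p : G.Walk b a}
    (hp : p.IsHamiltonian) (h : G.Adj a b) (hcard : 3 ≤ Fintype.card V) :
    (cons h p).IsHamiltonianCycle := by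
  have hedge : s(a, b) ∉ p.edges := fun he => by
    have := hp.isPath.length_eq_one_of_mem_edges (Sym2.eq_swap ▸ he)
    have := hp.length_eq
    omega
  refine isHamiltonianCycle_iff_isCycle_and_support_count_tail_eq_one.2 ⟨?_, ?_⟩
  · exact (cons_isCycle_iff p h).2 ⟨hp.isPath, hedge⟩
  · rw [support_cons, List.tail_cons]
    exact hp

lemma IsHamiltonian.mem_support_map_iff {a b : V} {p : G.Walk a b} (hp : p.IsHamiltonian)
    (f : G →g H) {y : W} : y ∈ (p.map f).support ↔ y ∈ Set.range f := by
  simp only [support_map, List.mem_map, Set.mem_range]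
  exact ⟨fun ⟨x, _, hx⟩ => ⟨x, hx⟩, fun ⟨x, hx⟩ => ⟨x, hp.mem_support x, hx⟩⟩

end Walk

lemma Preconnected.exists_dist_le_one_and_isHamiltonian_cube_walk [DecidableEq V]
    (hG : G.Preconnected) (u : V)
    (hadj : ∀ ⦃v⦄, G.Adj u v → ∃ p : G.cube.Walk u v, p.IsHamiltonian) :
    ∃ z, G.dist u z ≤ 1 ∧ ∃ p : G.cube.Walk u z, p.IsHamiltonian := by
  cases subsingleton_or_nontrivial V with
  | inl _ => exact ⟨u, by simp, nil, .of_subsingleton⟩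
  | inr _ =>
    obtain ⟨v, huv⟩ := hG.exists_adj_of_nontrivial u
    exact ⟨v, (dist_eq_one_iff_adj.2 huv).le, hadj huv⟩

lemma exists_cube_walk_spanning_connectedComponent [DecidableEq V] {T : SimpleGraph V}
    (hGT : G ≤ T) (u : V)
    (hC : ∀ ⦃a b⦄, (G.connectedComponentMk u).toSimpleGraph.Adj a b →
      ∃ p : (G.connectedComponentMk u).toSimpleGraph.cube.Walk a b, p.IsHamiltonian) :
    ∃ z, T.dist u z ≤ 1 ∧
      ∃ q : T.cube.Walk u z, q.support.Nodup ∧ ∀ x, x ∈ q.support ↔ G.Reachable x u := by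
  set C := G.connectedComponentMk u
  have hconn := C.connected_toSimpleGraph
  obtain ⟨z, hz, p, hp⟩ :=
    hconn.preconnected.exists_dist_le_one_and_isHamiltonian_cube_walk ⟨u, rfl⟩ fun _ h => hC h
  let f : C.toSimpleGraph →g T := (Hom.ofLE hGT).comp C.toSimpleGraph_hom
  have hf : Function.Injective f := Subtype.val_injective
  let g := f.cube hf hconn.preconnected
  refine ⟨z, (f.dist_le (hconn.preconnected _ _)).trans hz, p.map g,
    (hp.isPath.map (f := g) hf).support_nodup, fun x => hp.mem_support_map_iff g |>.trans ?_⟩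
  change x ∈ Set.range Subtype.val ↔ _
  rw [Subtype.range_coe]
  exact ConnectedComponent.eq

theorem IsTree.exists_isHamiltonian_cube_walk [Finite V] [DecidableEq V] (hG : G.IsTree)
    (huv : G.Adj u v) : ∃ p : G.cube.Walk u v, p.IsHamiltonian := by
  induction hn : Nat.card V using Nat.strong_induction_on generalizing V with
  | _ n ih =>
  set G' := G.deleteEdges {s(u, v)}
  have hG' : G' ≤ G := deleteEdges_le _
  have hsep : ¬G'.Reachable u v := isAcyclic_iff_forall_adj_isBridge.1 hG.isAcyclic huv
  have half : ∀ {a b}, ¬G'.Reachable b a → ∃ z, G.dist a z ≤ 1 ∧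
      ∃ q : G.cube.Walk a z, q.support.Nodup ∧ ∀ x, x ∈ q.support ↔ G'.Reachable x a := by
    intro a b hba
    refine exists_cube_walk_spanning_connectedComponent hG' a fun c d hcd => ?_
    have hcard : Nat.card (G'.connectedComponentMk a).supp < n :=
      hn ▸ Finite.card_subtype_lt (x := b) (by simpa [ConnectedComponent.eq] using hba)
    exact ih _ hcard ⟨ConnectedComponent.connected_toSimpleGraph _,
      (hG.isAcyclic.anti hG').induce _⟩ hcd rfl
  obtain ⟨z₁, hz₁, q₁, hnd₁, hmem₁⟩ := half (hsep ∘ .symm)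
  obtain ⟨z₂, hz₂, q₂, hnd₂, hmem₂⟩ := half hsep
  have hmem₂' : ∀ x, x ∈ q₂.reverse.support ↔ G'.Reachable x v := by
    simpa only [support_reverse, List.mem_reverse] using hmem₂
  have hsides : ∀ x, G'.Reachable x u → ¬G'.Reachable x v := fun x hu hv =>
    hsep (hu.symm.trans hv)
  have hz : G.cube.Adj z₁ z₂ := by
    refine ⟨fun h => hsides z₁ ((hmem₁ z₁).1 q₁.end_mem_support) ?_, ?_⟩
    · exact h ▸ (hmem₂ z₂).1 q₂.end_mem_support
    · have := hG.connected.dist_triangle (u := z₁) (v := u) (w := z₂)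
      have := hG.connected.dist_triangle (u := u) (v := v) (w := z₂)
      rw [dist_comm] at hz₁
      have := dist_eq_one_iff_adj.2 huv
      omega
  refine ⟨q₁.append (cons hz q₂.reverse), isHamiltonian_append_cons hz hnd₁
    (support_reverse q₂ ▸ List.nodup_reverse.2 hnd₂) ?_ fun x => ?_⟩
  · exact List.disjoint_left.2 fun x h₁ h₂ => hsides x ((hmem₁ x).1 h₁) ((hmem₂' x).1 h₂)
  · exact (reachable_deleteEdges_or_of_reachable (hG.connected x u)).imp
      (hmem₁ x).2 (hmem₂' x).2

end SimpleGraph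

/-- Sekanina: if `T` is a tree on at least 3 vertices and `u₁u₂` is an edge
of `T`, then the cube `T³` contains a Hamiltonian cycle using the edge `u₁u₂`. -/
theorem cube_of_tree_hamiltonian
    {V : Type*} [Fintype V] [DecidableEq V] (hV : 3 ≤ Fintype.card V)
    (T : SimpleGraph V) (hT : T.IsTree) (u₁ u₂ : V) (h : T.Adj u₁ u₂) :
    ∃ (a : V) (w : T.cube.Walk a a), w.IsHamiltonianCycle ∧ s(u₁, u₂) ∈ w.edges := by
  obtain ⟨p, hp⟩ := hT.exists_isHamiltonian_cube_walk h.symm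
  exact ⟨u₁, .cons h.cube p, hp.isHamiltonianCycle_cons h.cube hV, List.mem_cons_self⟩
end

section
/- Let k ≥ 1 be a real number. For every x ∈ [0, 2π], (2 + cos x)^k + (2 + sin²(x/2))^k ≤ 3^k + 2^k; that is, the function h(x) = (2 + cos x)^k + (2 + sin²(x/2))^k on [0, 2π] attains its maximum value at x = 0. -/
open Real

/-!
Put `s = sin² (x / 2) ∈ [0, 1]`, so that `2 + cos x = 3 - 2 s = (1 - s) • 3 + s • 1` and
`2 + s = (1 - s) • 2 + s • 3`. Convexity of `t ↦ t ^ k` bounds the sum by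
`3 ^ k + 2 ^ k - s (2 ^ k - 1)`, and `2 ^ k ≥ 1`.
-/

theorem ConvexOn.apply_three_sub_two_mul_add_apply_two_add_le {D : Set ℝ} {f : ℝ → ℝ}
    (hf : ConvexOn ℝ D f) (h1 : (1 : ℝ) ∈ D) (h2 : (2 : ℝ) ∈ D) (h3 : (3 : ℝ) ∈ D)
    (hf12 : f 1 ≤ f 2) {s : ℝ} (hs : s ∈ Set.Icc (0 : ℝ) 1) :
    f (3 - 2 * s) + f (2 + s) ≤ f 3 + f 2 := by
  obtain ⟨hs0, hs1⟩ := hs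
  have hfirst : f (3 - 2 * s) ≤ (1 - s) * f 3 + s * f 1 := by
    simpa only [smul_eq_mul, show (1 - s) * 3 + s * 1 = 3 - 2 * s by ring] using
      hf.2 h3 h1 (sub_nonneg.2 hs1) hs0 (sub_add_cancel 1 s)
  have hsecond : f (2 + s) ≤ (1 - s) * f 2 + s * f 3 := by
    simpa only [smul_eq_mul, show (1 - s) * 2 + s * 3 = 2 + s by ring] using
      hf.2 h2 h3 (sub_nonneg.2 hs1) hs0 (sub_add_cancel 1 s)
  nlinarith

theorem Real.cos_eq_one_sub_two_mul_sin_half_sq (x : ℝ) :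
    cos x = 1 - 2 * sin (x / 2) ^ 2 := by
  rw [sin_sq_eq_half_sub, mul_div_cancel₀ x two_ne_zero]
  ring

theorem h_max_at_zero_general (k : ℝ) (hk : 1 ≤ k) (x : ℝ) :
    (2 + Real.cos x) ^ k + (2 + Real.sin (x / 2) ^ 2) ^ k ≤ 3 ^ k + 2 ^ k := by
  have hs : sin (x / 2) ^ 2 ∈ Set.Icc (0 : ℝ) 1 := ⟨sq_nonneg _, sin_sq_le_one _⟩
  have hcos : 2 + cos x = 3 - 2 * sin (x / 2) ^ 2 := by
    rw [cos_eq_one_sub_two_mul_sin_half_sq]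
    ring
  rw [hcos]
  refine (convexOn_rpow hk).apply_three_sub_two_mul_add_apply_two_add_le
    (by norm_num) (by norm_num) (by norm_num) ?_ hs
  rw [one_rpow]
  exact one_le_rpow (by norm_num) (by linarith)

/-- for k ≥ 1, the function h(x) = (2 + cos x)^k + (2 + sin²(x/2))^k on
[0, 2π] attains its maximum value 3^k + 2^k at x = 0. -/
theorem h_max_at_zero (k : ℝ) (hk : 1 ≤ k) (x : ℝ) (hx : x ∈ Set.Icc 0 (2 * π)) :
    (2 + Real.cos x) ^ k + (2 + Real.sin (x / 2) ^ 2) ^ k ≤ 3 ^ k + 2 ^ k :=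
  h_max_at_zero_general k hk x
end

section
/- Let α ≥ 2 be a real number, and let p, q, r be points in d-dimensional Euclidean space with r ≠ p and r ≠ q. If the angle ∠prq (at vertex r) is at least π/2, then dist(p,r)^α + dist(r,q)^α ≤ dist(p,q)^α. -/
/-! An angle of at least `π / 2` makes the cosine term in the law of cosines nonpositive, which
is the case `α = 2`; larger `α` follow since `x ↦ x ^ (α / 2)` is superadditive on `[0, ∞)`. -/

open Real EuclideanGeometry

lemma Real.rpow_add_rpow_le_rpow_of_le {a b c s t : ℝ} (ha : 0 ≤ a) (hb : 0 ≤ b) (hc : 0 ≤ c)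
    (hs : 0 < s) (hst : s ≤ t) (h : a ^ s + b ^ s ≤ c ^ s) :
    a ^ t + b ^ t ≤ c ^ t := by
  have hpow : ∀ x : ℝ, 0 ≤ x → x ^ t = (x ^ s) ^ (t / s) := fun x hx => by
    rw [← rpow_mul hx, mul_div_cancel₀ t hs.ne']
  have hts : 1 ≤ t / s := (one_le_div hs).2 hst
  rw [hpow a ha, hpow b hb, hpow c hc]
  calc (a ^ s) ^ (t / s) + (b ^ s) ^ (t / s)
      ≤ (a ^ s + b ^ s) ^ (t / s) :=
        add_rpow_le_rpow_add (by positivity) (by positivity) hts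
    _ ≤ (c ^ s) ^ (t / s) := rpow_le_rpow (by positivity) h (by linarith)

lemma EuclideanGeometry.dist_sq_add_dist_sq_le_of_pi_div_two_le_angle
    {V P : Type*} [NormedAddCommGroup V] [InnerProductSpace ℝ V] [MetricSpace P]
    [NormedAddTorsor V P] {p q r : P} (h : π / 2 ≤ ∠ p r q) :
    dist p r ^ 2 + dist r q ^ 2 ≤ dist p q ^ 2 := by
  have hcos : cos (∠ p r q) ≤ 0 :=
    cos_nonpos_of_pi_div_two_le_of_le h (by linarith [angle_le_pi p r q, pi_pos])
  have hprod : 0 ≤ 2 * dist p r * dist q r := by positivity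
  rw [sq, sq, sq, law_cos p r q, dist_comm r q]
  linarith [mul_nonpos_of_nonneg_of_nonpos hprod hcos]

theorem obtuse_angle_power_distance_general
    (α : ℝ) (hα : 2 ≤ α) (d : ℕ)
    (p q r : EuclideanSpace ℝ (Fin d))
    (hangle : π / 2 ≤ ∠ p r q) :
    dist p r ^ α + dist r q ^ α ≤ dist p q ^ α := by
  have hsq : dist p r ^ (2 : ℝ) + dist r q ^ (2 : ℝ) ≤ dist p q ^ (2 : ℝ) := by
    simpa only [rpow_two] using dist_sq_add_dist_sq_le_of_pi_div_two_le_angle hangle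
  exact rpow_add_rpow_le_rpow_of_le dist_nonneg dist_nonneg dist_nonneg two_pos hα hsq

/-- for α ≥ 2, if the angle at `r` in the triangle `p r q` is at least π/2,
then `dist p r ^ α + dist r q ^ α ≤ dist p q ^ α`. -/
theorem obtuse_angle_power_distance
    (α : ℝ) (hα : 2 ≤ α) (d : ℕ)
    (p q r : EuclideanSpace ℝ (Fin d)) (hrp : r ≠ p) (hrq : r ≠ q)
    (hangle : π / 2 ≤ ∠ p r q) :
    dist p r ^ α + dist r q ^ α ≤ dist p q ^ α :=
  obtuse_angle_power_distance_general α hα d p q r hangle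
end
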